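/- Let (L|K,v) be a unibranched Kummer extension of valued fields of prime degree q with q ≠ char Kv. Then: (1) if [Lv : Kv] = q, there exists a Kummer generator η ∈ O_L^× with vη = 0 such that ηv is a Kummer generator of the residue extension Lv|Kv, i.e., Lv = Kv(ηv) and (ηv)^q ∈ Kv; (2) if (vL : vK) = q, there exists a Kummer generator η ∈ L such that vL = vK + ℤ·vη. -/

import Mathlib

open scoped TensorProduct

set_option maxHeartbeats 1000000
set_option synthInstance.maxHeartbeats 400000

noncomputable section

namespace VP

universe u

variable {Γ : Type*} [LinearOrderedCommGroupWithZero Γ]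

/-! ### Ordered abelian group notions (multiplicative, inside `Γˣ`) -/

/-- `H` is a convex subgroup of the ordered abelian group `S`. -/
def ConvexIn (S H : Subgroup Γˣ) : Prop :=
  H ≤ S ∧ ∀ a ∈ H, ∀ b ∈ S, 1 ≤ b → b ≤ a → b ∈ H

/-- the element `γ : Γ` is (the coercion of) a member of `H`. -/
def MemVal (H : Subgroup Γˣ) (γ : Γ) : Prop := ∃ u ∈ H, (u : Γ) = γ

/-- The smallest convex subgroup of `S` containing (the element of `S` with value) `γ`. -/
def smallestConvexIn (S : Subgroup Γˣ) (γ : Γ) : Subgroup Γˣ :=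
  sInf {H | ConvexIn S H ∧ MemVal H γ}

/-- The largest convex subgroup of `S` not containing `γ`. -/
def largestConvexAvoiding (S : Subgroup Γˣ) (γ : Γ) : Subgroup Γˣ :=
  sSup {H | ConvexIn S H ∧ ¬ MemVal H γ}

/-- The archimedean component of `S` at `γ`, i.e. the quotient of the smallest convex
subgroup containing `γ` by the largest convex subgroup avoiding `γ`, is a discretely
ordered group, i.e. has a smallest element `> 1`. -/
def ArchComponentDiscrete (S : Subgroup Γˣ) (γ : Γ) : Prop :=
  ∃ a ∈ smallestConvexIn S γ, 1 < a ∧ a ∉ largestConvexAvoiding S γ ∧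
    ∀ b ∈ smallestConvexIn S γ, 1 < b → b ∉ largestConvexAvoiding S γ →
      ∃ h ∈ largestConvexAvoiding S γ, a ≤ b * h

/-! ### Value groups, valuation rings, residue fields -/

/-- The value group of a valuation on a field, as a subgroup of `Γˣ`. -/
def valueGroup {L : Type*} [Field L] (v : Valuation L Γ) : Subgroup Γˣ :=
  MonoidHom.range (Units.map (v.toMonoidWithZeroHom.toMonoidHom))

section homs

variable {A B C : Type*} [Field A] [Field B] [Field C]

/-- The inclusion of valuation rings induced by a field embedding. -/
def extHom (f : A →+* B) (v : Valuation B Γ) :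
    (v.comap f).valuationSubring →+* v.valuationSubring where
  toFun x := ⟨f x.1, x.2⟩
  map_one' := Subtype.ext (map_one f)
  map_mul' x y := Subtype.ext (map_mul f x.1 y.1)
  map_zero' := Subtype.ext (map_zero f)
  map_add' x y := Subtype.ext (map_add f x.1 y.1)

/-- The inclusion of valuation rings in an intermediate stage of a tower. -/
def towerHom (g : A →+* B) (h : B →+* C) (f : A →+* C) (hf : h.comp g = f)
    (v : Valuation C Γ) :
    (v.comap f).valuationSubring →+* (v.comap h).valuationSubring where
  toFun x := ⟨g x.1, by subst hf; exact x.2⟩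
  map_one' := Subtype.ext (map_one g)
  map_mul' x y := Subtype.ext (map_mul g x.1 y.1)
  map_zero' := Subtype.ext (map_zero g)
  map_add' x y := Subtype.ext (map_add g x.1 y.1)

theorem one_of_mul_eq_one {x y : Γ} (hx : x ≤ 1) (hy : y ≤ 1) (hxy : x * y = 1) :
    x = 1 := by
  rcases lt_or_eq_of_le hx with hx' | hx'
  · exfalso
    have : x * y < 1 := by
      calc x * y ≤ x * 1 := by
            gcongr
        _ = x := mul_one x
        _ < 1 := hx'
    rw [hxy] at this
    exact lt_irrefl _ this
  · exact hx'

/-- A ring homomorphism between valuation rings which is compatible with the valuations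
is a local homomorphism. -/
theorem isLocalHom_of_map_val {u : Valuation A Γ} {w : Valuation B Γ}
    (φ : u.valuationSubring →+* w.valuationSubring)
    (hφ : ∀ x : u.valuationSubring, w (φ x : B) = u (x : A)) :
    IsLocalHom φ := by
  constructor
  intro a ha
  rcases ha with ⟨uu, huu⟩
  have hprod : ((uu : w.valuationSubring) : B) * (((uu⁻¹ : _) : w.valuationSubring) : B) = 1 := by
    norm_cast
    rw [mul_inv_cancel]
    rfl
  have h1 : w ((φ a : B)) = 1 := by
    apply one_of_mul_eq_one (x := w ((φ a : B))) (y := w (((uu⁻¹ : _) : w.valuationSubring) : B))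
    · exact (φ a).2
    · exact ((uu⁻¹ : _) : w.valuationSubring).2
    · rw [← map_mul]
      rw [huu] at hprod
      rw [hprod, map_one]
  have hu1 : u (a : A) = 1 := by rw [← hφ a, h1]
  have hane : (a : A) ≠ 0 := by
    intro h0
    rw [h0, map_zero] at hu1
    exact zero_ne_one hu1
  have hinv : ((a : A)⁻¹) ∈ u.valuationSubring := by
    rw [Valuation.mem_valuationSubring_iff, map_inv₀, hu1, inv_one]
  refine IsUnit.of_mul_eq_one (a := a) ⟨(a : A)⁻¹, hinv⟩ ?_
  exact Subtype.ext (mul_inv_cancel₀ hane)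

theorem extHom_val (f : A →+* B) (v : Valuation B Γ) (x : (v.comap f).valuationSubring) :
    v ((extHom f v x : B)) = (v.comap f) (x : A) := rfl

theorem towerHom_val (g : A →+* B) (h : B →+* C) (f : A →+* C) (hf : h.comp g = f)
    (v : Valuation C Γ) (x : (v.comap f).valuationSubring) :
    (v.comap h) ((towerHom g h f hf v x : B)) = (v.comap f) (x : A) := by
  subst hf
  rfl

instance extHom_isLocalHom (f : A →+* B) (v : Valuation B Γ) : IsLocalHom (extHom f v) :=
  isLocalHom_of_map_val (extHom f v) (extHom_val f v)

instance towerHom_isLocalHom (g : A →+* B) (h : B →+* C) (f : A →+* C) (hf : h.comp g = f)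
    (v : Valuation C Γ) : IsLocalHom (towerHom g h f hf v) :=
  isLocalHom_of_map_val (towerHom g h f hf v) (towerHom_val g h f hf v)

/-- The algebra structure on the valuation ring of `v` over the valuation ring of the
restriction of `v`. -/
def extAlgebra (f : A →+* B) (v : Valuation B Γ) :
    Algebra (v.comap f).valuationSubring v.valuationSubring :=
  (extHom f v).toAlgebra

/-- The algebra structure between valuation rings of restrictions in a tower. -/
def towerAlgebra (g : A →+* B) (h : B →+* C) (f : A →+* C) (hf : h.comp g = f)
    (v : Valuation C Γ) :
    Algebra (v.comap f).valuationSubring (v.comap h).valuationSubring :=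
  (towerHom g h f hf v).toAlgebra

/-- The induced map between residue fields. -/
def extResMap (f : A →+* B) (v : Valuation B Γ) :
    IsLocalRing.ResidueField (v.comap f).valuationSubring →+*
      IsLocalRing.ResidueField v.valuationSubring :=
  IsLocalRing.ResidueField.map (extHom f v)

/-- The residue field of the extension as an algebra over the residue field of the base. -/
def extResAlgebra (f : A →+* B) (v : Valuation B Γ) :
    Algebra (IsLocalRing.ResidueField (v.comap f).valuationSubring)
      (IsLocalRing.ResidueField v.valuationSubring) :=
  (extResMap f v).toAlgebra

/-- The induced map between residue fields in a tower. -/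
def towerResMap (g : A →+* B) (h : B →+* C) (f : A →+* C) (hf : h.comp g = f)
    (v : Valuation C Γ) :
    IsLocalRing.ResidueField (v.comap f).valuationSubring →+*
      IsLocalRing.ResidueField (v.comap h).valuationSubring :=
  IsLocalRing.ResidueField.map (towerHom g h f hf v)

def towerResAlgebra (g : A →+* B) (h : B →+* C) (f : A →+* C) (hf : h.comp g = f)
    (v : Valuation C Γ) :
    Algebra (IsLocalRing.ResidueField (v.comap f).valuationSubring)
      (IsLocalRing.ResidueField (v.comap h).valuationSubring) :=
  (towerResMap g h f hf v).toAlgebra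

end homs

section ext

variable (K : Type*) {L : Type*} [Field K] [Field L] [Algebra K L]

/-- The extension of valued fields `(L|K,v)` is unibranched: the restriction of `v` to `K`
has a unique extension to `L` up to equivalence (phrased via valuation subrings of `L`
lying over the valuation subring of the restriction of `v` to `K`). -/
def IsUnibranched (v : Valuation L Γ) : Prop :=
  ∀ O : ValuationSubring L,
    (∀ x : K, algebraMap K L x ∈ O ↔ v (algebraMap K L x) ≤ 1) → O = v.valuationSubring

/-- The ramification index `e(L|K,v) = (vL : vK)`. -/
def ramificationIndex (v : Valuation L Γ) : ℕ :=
  (valueGroup (v.comap (algebraMap K L))).relIndex (valueGroup v)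

/-- The residue degree `f(L|K,v) = [Lv : Kv]`. -/
def residueDegree (v : Valuation L Γ) : ℕ :=
  letI := extResAlgebra (algebraMap K L) v
  Module.finrank (IsLocalRing.ResidueField (v.comap (algebraMap K L)).valuationSubring)
    (IsLocalRing.ResidueField v.valuationSubring)

/-- `(L|K,v)` is defectless: `[L:K] = e(L|K,v) ⬝ f(L|K,v)`. -/
def IsDefectless (v : Valuation L Γ) : Prop :=
  Module.finrank K L = ramificationIndex K v * residueDegree K v

/-- The subring `𝒪_K[x]` of `L` generated by the valuation ring of `v|_K` and `x : L`. -/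
def adjoinRing (v : Valuation L Γ) (x : L) : Subring L :=
  Subring.closure
    ((((v.comap (algebraMap K L)).valuationSubring.toSubring.map (algebraMap K L)) : Set L) ∪ {x})

/-- `vL = vK + ℤ ⬝ vx`; i.e. the value of `x` generates the value group extension. -/
def GeneratesValueGroup (v : Valuation L Γ) (x : L) : Prop :=
  ∀ y : L, y ≠ 0 → ∃ (c : K) (n : ℤ), c ≠ 0 ∧ v y = v (algebraMap K L c) * (v x) ^ n

/-- `θ` is an Artin-Schreier generator of `L|K` (for degree `p`):
`L = K(θ)` and `θ^p - θ ∈ K`. -/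
def IsASGenerator (p : ℕ) (θ : L) : Prop :=
  IntermediateField.adjoin K {θ} = ⊤ ∧ θ ^ p - θ ∈ (algebraMap K L).range

/-- `η` is a Kummer generator of `L|K` (of degree `q`): `L = K(η)` and `η^q ∈ K`. -/
def IsKummerGenerator (q : ℕ) (η : L) : Prop :=
  IntermediateField.adjoin K {η} = ⊤ ∧ η ^ q ∈ (algebraMap K L).range

/-- `σ` belongs to the inertia group of `(L|K,v)`: it lies in the decomposition group
(`v ∘ σ` is equivalent to `v`) and `v (σ x - x) > 0` (additively) for all `x ∈ 𝒪_L`. -/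
def InInertia (v : Valuation L Γ) (σ : L ≃ₐ[K] L) : Prop :=
  (v.comap σ.toAlgHom.toRingHom).IsEquiv v ∧ ∀ x : L, v x ≤ 1 → v (σ x - x) < 1

/-- The inertia field of `(L|K,v)`: the fixed field of the inertia group. -/
def inertiaField (v : Valuation L Γ) : IntermediateField K L where
  carrier := {x | ∀ σ : L ≃ₐ[K] L, InInertia K v σ → σ x = x}
  mul_mem' := fun {a b} ha hb σ hσ => by rw [map_mul, ha σ hσ, hb σ hσ]
  one_mem' := fun σ _ => map_one σ
  add_mem' := fun {a b} ha hb σ hσ => by rw [map_add, ha σ hσ, hb σ hσ]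
  zero_mem' := fun σ _ => map_zero σ
  algebraMap_mem' := fun r σ _ => σ.commutes r
  inv_mem' := fun x hx σ hσ => by rw [map_inv₀, hx σ hσ]

end ext


section extinst

variable {A B : Type*} [Field A] [Field B] [Algebra A B]

/-- The valuation ring of `v` is an algebra over the valuation ring of its restriction. -/
instance extAlgebraI (v : Valuation B Γ) :
    Algebra (v.comap (algebraMap A B)).valuationSubring v.valuationSubring :=
  extAlgebra (algebraMap A B) v

/-- The residue field of `v` is an algebra over the residue field of its restriction. -/
instance extResAlgebraI (v : Valuation B Γ) :
    Algebra (IsLocalRing.ResidueField (v.comap (algebraMap A B)).valuationSubring)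
      (IsLocalRing.ResidueField v.valuationSubring) :=
  extResAlgebra (algebraMap A B) v

end extinst

section inter

variable {K L : Type*} [Field K] [Field L] [Algebra K L] (v : Valuation L Γ)

instance interBaseAlgebra (E : IntermediateField K L) :
    Algebra (v.comap (algebraMap K L)).valuationSubring
      (v.comap (algebraMap E L)).valuationSubring :=
  towerAlgebra (algebraMap K E) (algebraMap E L) (algebraMap K L)
    (IsScalarTower.algebraMap_eq K E L).symm v

instance interBaseResAlgebra (E : IntermediateField K L) :
    Algebra (IsLocalRing.ResidueField (v.comap (algebraMap K L)).valuationSubring)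
      (IsLocalRing.ResidueField (v.comap (algebraMap E L)).valuationSubring) :=
  towerResAlgebra (algebraMap K E) (algebraMap E L) (algebraMap K L)
    (IsScalarTower.algebraMap_eq K E L).symm v

/-- The algebra structure between the valuation rings of restrictions of `v` along a
step `E ≤ E'` of intermediate fields. -/
def stepAlgebra {E E' : IntermediateField K L} (h : E ≤ E') :
    Algebra (v.comap (algebraMap E L)).valuationSubring
      (v.comap (algebraMap E' L)).valuationSubring :=
  towerAlgebra (IntermediateField.inclusion h).toRingHom (algebraMap E' L) (algebraMap E L)
    (RingHom.ext fun _ => rfl) v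

/-- The corresponding algebra structure between residue fields. -/
def stepResAlgebra {E E' : IntermediateField K L} (h : E ≤ E') :
    Algebra (IsLocalRing.ResidueField (v.comap (algebraMap E L)).valuationSubring)
      (IsLocalRing.ResidueField (v.comap (algebraMap E' L)).valuationSubring) :=
  towerResAlgebra (IntermediateField.inclusion h).toRingHom (algebraMap E' L) (algebraMap E L)
    (RingHom.ext fun _ => rfl) v

def stepScalarTower {E E' : IntermediateField K L} (h : E ≤ E') :
    letI := stepAlgebra v h
    IsScalarTower (v.comap (algebraMap K L)).valuationSubring
      (v.comap (algebraMap E L)).valuationSubring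
      (v.comap (algebraMap E' L)).valuationSubring := by
  letI := stepAlgebra v h
  refine IsScalarTower.of_algebraMap_eq fun x => ?_
  rfl

end inter

section tower3

variable {K L M : Type*} [Field K] [Field L] [Field M] [Algebra K L] [Algebra L M]
  [Algebra K M] [IsScalarTower K L M] (v : Valuation M Γ)

instance midAlgebra :
    Algebra (v.comap (algebraMap K M)).valuationSubring
      (v.comap (algebraMap L M)).valuationSubring :=
  towerAlgebra (algebraMap K L) (algebraMap L M) (algebraMap K M)
    (IsScalarTower.algebraMap_eq K L M).symm v

instance rings3ScalarTower :
    IsScalarTower (v.comap (algebraMap K M)).valuationSubring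
      (v.comap (algebraMap L M)).valuationSubring v.valuationSubring :=
  IsScalarTower.of_algebraMap_eq fun x =>
    Subtype.ext (IsScalarTower.algebraMap_apply K L M (x : K))

end tower3

/-- `(K,v)` is henselian: every algebraic field extension of `K` admits a unique
extension of `v` up to equivalence (phrased via valuation subrings lying over the
valuation ring of `v`). -/
def IsHenselianValued {K : Type u} [Field K] (v : Valuation K Γ) : Prop :=
  ∀ (L : Type u) [Field L] [Algebra K L], Algebra.IsAlgebraic K L →
    ∃! O : ValuationSubring L, ∀ x : K, algebraMap K L x ∈ O ↔ v x ≤ 1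


/-- `B|A` is a tower of finite Galois extensions. -/
def IsGaloisTower (A B : Type*) [Field A] [Field B] [Algebra A B] : Prop :=
  ∃ (n : ℕ) (ch : Fin (n + 1) → IntermediateField A B),
    ch 0 = ⊥ ∧ ch (Fin.last n) = ⊤ ∧
    ∀ i : Fin n, ∃ h : ch i.castSucc ≤ ch i.succ,
      letI : Algebra (ch i.castSucc) (ch i.succ) :=
        (IntermediateField.inclusion h).toRingHom.toAlgebra
      letI : Module (ch i.castSucc) (ch i.succ) := Algebra.toModule
      IsGalois (ch i.castSucc) (ch i.succ) ∧ FiniteDimensional (ch i.castSucc) (ch i.succ)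

section dr

variable {K : Type*} [Field K]

/-- Condition (DRvg): for convex subgroups `Γ₁ ⊊ Γ₂` of the value group `vK`, the
quotient `Γ₂/Γ₁` is not isomorphic to `ℤ`. -/
def DRvg (v : Valuation K Γ) : Prop :=
  ∀ H₁ H₂ : Subgroup Γˣ, ConvexIn (valueGroup v) H₁ → ConvexIn (valueGroup v) H₂ →
    H₁ < H₂ → IsEmpty ((↥H₂ ⧸ H₁.subgroupOf H₂) ≃* Multiplicative ℤ)

/-- Condition (DRvr): if the residue characteristic is `p > 0`, then the `p`-power map on
`𝒪_{K̂}/p𝒪_{K̂}` is surjective, where `𝒪_{K̂}` is the valuation ring of the completion. -/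
def DRvr (v : Valuation K Γ) : Prop :=
  ∀ p : ℕ, p.Prime → CharP (IsLocalRing.ResidueField v.valuationSubring) p →
    letI : Valued K Γ := Valued.mk' v
    Function.Surjective
      (fun x : (Valued.extensionValuation (K := K) (Γ₀ := Γ)).integer ⧸
          (Ideal.span {(p : (Valued.extensionValuation (K := K) (Γ₀ := Γ)).integer)}) => x ^ p)

/-- `(K,v)` is a deeply ramified field: conditions (DRvg) and (DRvr) hold. -/
def IsDeeplyRamified (v : Valuation K Γ) : Prop := DRvg v ∧ DRvr v

/-- `(K,v)` is nontrivially valued. -/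
def IsNontriviallyValued (v : Valuation K Γ) : Prop := ∃ x : K, x ≠ 0 ∧ v x ≠ 1

end dr

end VP
open VP IsLocalRing

universe u v

/-!
Pick a Kummer generator `a` and an automorphism `σ` with `σ a = ζ a`. As `v` extends uniquely
from `K`, every `v ∘ σᵏ` is equivalent to `v`; together with `v q = 1` (from `q ≠ char Kv`) this
forces `v (∑ cᵢ aⁱ) = maxᵢ v (cᵢ aⁱ)`, by projecting onto the eigenspaces of `σ`.
If `v a ∈ vK`, rescale `a` to a unit `η`: then `vL = vK`, and `Lv` is generated by the residue
of `η`. Otherwise, since `q` is prime, no `v (aⁱ)` with `0 < i < q` lies in `vK`, so `Lv = Kv`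
and `vL` is generated by `vK` and `v a`.
-/

open Finset

theorem Valuation.map_eq_one_of_pow_eq_one {R Γ : Type*} [Ring R]
    [LinearOrderedCommGroupWithZero Γ] (v : Valuation R Γ) {x : R} {n : ℕ} (hn : n ≠ 0)
    (hx : x ^ n = 1) : v x = 1 :=
  (pow_eq_one_iff_left hn).1 (by rw [← map_pow, hx, map_one])

theorem Valuation.mem_range_of_pow_mem_range_of_coprime {F Γ : Type*} [Field F]
    [LinearOrderedCommGroupWithZero Γ] (w : Valuation F Γ) {γ : Γ} {m n : ℕ}
    (hmn : m.Coprime n) (hm : γ ^ m ∈ Set.range w) (hn : γ ^ n ∈ Set.range w) :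
    γ ∈ Set.range w := by
  obtain rfl | hγ := eq_or_ne γ 0
  · exact ⟨0, w.map_zero⟩
  obtain ⟨x, hx⟩ := hm
  obtain ⟨y, hy⟩ := hn
  have hbezout : (1 : ℤ) = m * m.gcdA n + n * m.gcdB n := by
    rw [← Nat.gcd_eq_gcd_ab, hmn, Nat.cast_one]
  refine ⟨x ^ m.gcdA n * y ^ m.gcdB n, ?_⟩
  rw [map_mul, map_zpow₀, map_zpow₀, hx, hy, ← zpow_natCast, ← zpow_natCast, ← zpow_mul,
    ← zpow_mul, ← zpow_add₀ hγ, ← hbezout, zpow_one]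

theorem Valuation.map_natCast_eq_one_of_ringChar_ne {F Γ : Type*} [Field F]
    [LinearOrderedCommGroupWithZero Γ] (w : Valuation F Γ) {p : ℕ} (hp : p.Prime)
    (h : ringChar (ResidueField w.valuationSubring) ≠ p) : w p = 1 := by
  have hres : residue w.valuationSubring p ≠ 0 := by
    rw [map_natCast]
    exact fun h0 => h (CharP.ringChar_of_prime_eq_zero hp h0)
  simpa using (Valuation.valuationSubring.integers w).isUnit_iff_valuation_eq_one.1
    ((residue_ne_zero_iff_isUnit _).1 hres)

theorem IsPrimitiveRoot.geom_sum_inv_pow_mul_pow {K : Type*} [Field K] {ζ : K} {n : ℕ}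
    (hζ : IsPrimitiveRoot ζ n) {i j : ℕ} (hi : i < n) (hj : j < n) :
    ∑ k ∈ range n, ((ζ ^ i)⁻¹ * ζ ^ j) ^ k = if i = j then (n : K) else 0 := by
  have hζi : ζ ^ i ≠ 0 := pow_ne_zero _ (hζ.ne_zero (by omega))
  split_ifs with hij
  · subst hij
    simp [hζi]
  · have hne : (ζ ^ i)⁻¹ * ζ ^ j ≠ 1 := by
      rw [Ne, inv_mul_eq_one₀ hζi]
      exact fun h => hij (hζ.pow_inj hi hj h)
    rw [geom_sum_eq hne, mul_pow, inv_pow, ← pow_mul, ← pow_mul, mul_comm i, mul_comm j,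
      pow_mul, pow_mul, hζ.pow_eq_one, one_pow, one_pow, inv_one, mul_one, sub_self, zero_div]

theorem exists_eq_sum_range_pow_of_adjoin_eq_top {K L : Type*} [Field K] [Field L]
    [Algebra K L] [FiniteDimensional K L] {a : L} (ha : IntermediateField.adjoin K {a} = ⊤)
    (y : L) : ∃ c : ℕ → K, (∀ i, Module.finrank K L ≤ i → c i = 0) ∧
      y = ∑ i ∈ range (Module.finrank K L), algebraMap K L (c i) * a ^ i := by
  have hint := IsIntegral.of_finite K a
  let pb := PowerBasis.ofAdjoinEqTop hint (by
    rw [← IntermediateField.adjoin_simple_toSubalgebra_of_isAlgebraic hint.isAlgebraic, ha,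
      IntermediateField.top_toSubalgebra])
  obtain ⟨f, hf, rfl⟩ := pb.exists_eq_aeval y
  rw [← pb.finrank] at hf
  refine ⟨f.coeff, fun i hi => f.coeff_eq_zero_of_natDegree_lt (hf.trans_le hi), ?_⟩
  simp [pb, Polynomial.aeval_eq_sum_range' hf, Algebra.smul_def]

section Eigenvectors

variable {K L : Type*} [Field K] [Field L] [Algebra K L] {σ : L ≃ₐ[K] L} {ζ : K} {a : L}
  {n : ℕ}

theorem algEquiv_pow_apply_pow (hσ : σ a = algebraMap K L ζ * a) (k j : ℕ) :
    (σ ^ k) (a ^ j) = algebraMap K L ((ζ ^ j) ^ k) * a ^ j := by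
  induction k with
  | zero => simp
  | succ k ih =>
    rw [pow_succ, AlgEquiv.mul_apply, map_pow, hσ, mul_pow, map_mul, ← map_pow,
      AlgEquiv.commutes, ih, ← mul_assoc, ← map_mul, pow_succ, mul_comm (_ ^ k)]

theorem sum_algEquiv_pow_apply_sum (hσ : σ a = algebraMap K L ζ * a) (hζ : IsPrimitiveRoot ζ n)
    (c : ℕ → K) {i : ℕ} (hi : i < n) :
    ∑ k ∈ range n, algebraMap K L ((ζ ^ i)⁻¹ ^ k) *
        (σ ^ k) (∑ j ∈ range n, algebraMap K L (c j) * a ^ j) =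
      n * (algebraMap K L (c i) * a ^ i) := by
  calc _ = ∑ j ∈ range n, algebraMap K L (c j) * a ^ j *
        algebraMap K L (∑ k ∈ range n, ((ζ ^ i)⁻¹ * ζ ^ j) ^ k) := by
        simp only [map_sum, map_mul, AlgEquiv.commutes, algEquiv_pow_apply_pow hσ, Finset.mul_sum,
          mul_pow, map_pow]
        rw [Finset.sum_comm]
        exact Finset.sum_congr rfl fun j _ => Finset.sum_congr rfl fun k _ => by ring
    _ = n * (algebraMap K L (c i) * a ^ i) := by
        rw [Finset.sum_eq_single_of_mem i (mem_range.2 hi) fun j hj hji => by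
          rw [hζ.geom_sum_inv_pow_mul_pow hi (mem_range.1 hj), if_neg hji.symm, map_zero,
            mul_zero]]
        rw [hζ.geom_sum_inv_pow_mul_pow hi hi, if_pos rfl, map_natCast, mul_comm]

end Eigenvectors

namespace VP

variable {K L Γ : Type*} [Field K] [Field L] [Algebra K L] [LinearOrderedCommGroupWithZero Γ]
  {v : Valuation L Γ}

theorem exists_isKummerGenerator_algEquiv_apply_eq_mul [FiniteDimensional K L] [IsGalois K L]
    [IsCyclic (L ≃ₐ[K] L)] {ζ : K} (hζ : IsPrimitiveRoot ζ (Module.finrank K L)) :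
    ∃ a : L, IsKummerGenerator K (Module.finrank K L) a ∧
      ∃ σ : L ≃ₐ[K] L, σ a = algebraMap K L ζ * a := by
  have : NeZero (Module.finrank K L) := NeZero.of_pos Module.finrank_pos
  have hK : (primitiveRoots (Module.finrank K L) K).Nonempty :=
    ⟨ζ, (mem_primitiveRoots Module.finrank_pos).2 hζ⟩
  obtain ⟨a, ⟨k, hk⟩, ha⟩ := exists_root_adjoin_eq_top_of_isCyclic K L hK
  have := isSplittingField_X_pow_sub_C_of_root_adjoin_eq_top hK hk.symm ha
  refine ⟨a, ⟨ha, k, hk⟩, (autEquivZmod (irreducible_X_pow_sub_C_of_root_adjoin_eq_top hk.symm ha)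
    L hζ).symm (Multiplicative.ofAdd ((1 : ℕ) : ZMod _)), ?_⟩
  rw [autEquivZmod_symm_apply_natCast _ L hk.symm hζ 1, pow_one, Algebra.smul_def]

theorem IsKummerGenerator.ne_zero {n : ℕ} {a : L} (h : IsKummerGenerator K n a)
    (hL : Module.finrank K L ≠ 1) : a ≠ 0 := by
  rintro rfl
  exact hL (IntermediateField.bot_eq_top_iff_finrank_eq_one.1
    (IntermediateField.adjoin_zero (F := K) (E := L) ▸ h.1))

theorem IsKummerGenerator.algebraMap_mul {n : ℕ} {a : L} (h : IsKummerGenerator K n a) {c : K}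
    (hc : c ≠ 0) : IsKummerGenerator K n (algebraMap K L c * a) := by
  obtain ⟨hgen, k, hk⟩ := h
  have ha : a ∈ IntermediateField.adjoin K {algebraMap K L c * a} := by
    have := mul_mem (IntermediateField.algebraMap_mem _ c⁻¹)
      (IntermediateField.mem_adjoin_simple_self K (algebraMap K L c * a))
    rwa [map_inv₀, inv_mul_cancel_left₀ ((map_ne_zero (algebraMap K L)).2 hc)] at this
  exact ⟨eq_top_iff.2 (hgen ▸ IntermediateField.adjoin_simple_le_iff.2 ha), c ^ n * k,
    by rw [map_mul, hk, map_pow, mul_pow]⟩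

theorem residue_mem_range_algebraMap (x : v.valuationSubring)
    (hx : (x : L) ∈ (algebraMap K L).range) :
    residue _ x ∈ (algebraMap (ResidueField (v.comap (algebraMap K L)).valuationSubring)
      (ResidueField v.valuationSubring)).range := by
  obtain ⟨c, hc⟩ := hx
  have hc1 : v (algebraMap K L c) ≤ 1 := hc ▸ x.2
  exact ⟨residue _ ⟨c, hc1⟩, (ResidueField.map_residue _ _).trans (congrArg _ (Subtype.ext hc))⟩

theorem residueDegree_eq_one_of_surjective
    (h : Function.Surjective (algebraMap (ResidueField (v.comap (algebraMap K L)).valuationSubring)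
      (ResidueField v.valuationSubring))) : residueDegree K v = 1 := by
  let e := AlgEquiv.ofBijective
    (Algebra.ofId (ResidueField (v.comap (algebraMap K L)).valuationSubring)
      (ResidueField v.valuationSubring)) ⟨FaithfulSMul.algebraMap_injective _ _, h⟩
  exact e.toLinearEquiv.finrank_eq.symm.trans (Module.finrank_self _)

theorem ramificationIndex_eq_one_of_generatesValueGroup {a : L} (h : GeneratesValueGroup K v a)
    (ha : v a = 1) : ramificationIndex K v = 1 := by
  rw [ramificationIndex, Subgroup.relIndex_eq_one]
  rintro _ ⟨y, rfl⟩
  obtain ⟨c, m, hc, hy⟩ := h y y.ne_zero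
  refine ⟨Units.mk0 c hc, Units.ext ?_⟩
  simp [hy, ha]

theorem IsUnibranched.isEquiv_comap (huni : IsUnibranched K v) (τ : L ≃ₐ[K] L) :
    (v.comap (τ : L →+* L)).IsEquiv v :=
  (Valuation.isEquiv_iff_valuationSubring _ _).2 <| huni _ fun c => by simp

section Kummer

variable {σ : L ≃ₐ[K] L} {ζ : K} {a : L} {n : ℕ}

/-- If the sum `y` were smaller than the term `T`, so would be every conjugate `σᵏ y`, since
`v ∘ σᵏ` is equivalent to `v`; but `∑ ζ^{-ik} σᵏ y = n T` has the value of `T`. -/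
theorem IsUnibranched.valuation_le_valuation_sum (huni : IsUnibranched K v)
    (hσ : σ a = algebraMap K L ζ * a) (hζ : IsPrimitiveRoot ζ n) (hn : v (n : L) = 1)
    (c : ℕ → K) {i : ℕ} (hi : i < n) :
    v (algebraMap K L (c i) * a ^ i) ≤ v (∑ j ∈ range n, algebraMap K L (c j) * a ^ j) := by
  set T := algebraMap K L (c i) * a ^ i
  by_contra! hlt
  have hvζ : v (algebraMap K L ζ) = 1 :=
    v.map_eq_one_of_pow_eq_one (n := n) (by omega) (by rw [← map_pow, hζ.pow_eq_one, map_one])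
  have hσT (k : ℕ) : v ((σ ^ k) T) = v T := by
    rw [map_mul, AlgEquiv.commutes, algEquiv_pow_apply_pow hσ, mul_left_comm,
      v.map_mul (algebraMap K L _)]
    simp [T, hvζ]
  have hconj (k : ℕ) (_ : k ∈ range n) :
      v (algebraMap K L ((ζ ^ i)⁻¹ ^ k) * (σ ^ k) (∑ j ∈ range n,
        algebraMap K L (c j) * a ^ j)) < v T := by
    rw [map_mul, ← hσT k]
    simpa [hvζ] using ((huni.isEquiv_comap (σ ^ k)).lt_iff_lt).2 hlt
  have := v.map_sum_lt (ne_zero_of_lt (lt_of_le_of_lt zero_le hlt)) hconj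
  rw [sum_algEquiv_pow_apply_sum hσ hζ c hi, map_mul, hn, one_mul] at this
  exact lt_irrefl _ this

theorem IsUnibranched.exists_valuation_sum_eq (huni : IsUnibranched K v)
    (hσ : σ a = algebraMap K L ζ * a) (hζ : IsPrimitiveRoot ζ n) (hn : v (n : L) = 1)
    (c : ℕ → K) : ∃ i < n, v (∑ j ∈ range n, algebraMap K L (c j) * a ^ j) =
      v (algebraMap K L (c i) * a ^ i) := by
  have hn0 : n ≠ 0 := by rintro rfl; simp at hn
  obtain ⟨i, hi, hmax⟩ := (range n).exists_max_image (fun j => v (algebraMap K L (c j) * a ^ j))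
    (nonempty_range_iff.2 hn0)
  exact ⟨i, mem_range.1 hi, le_antisymm (v.map_sum_le hmax)
    (huni.valuation_le_valuation_sum hσ hζ hn c (mem_range.1 hi))⟩

theorem IsUnibranched.generatesValueGroup [FiniteDimensional K L] (huni : IsUnibranched K v)
    (hσ : σ a = algebraMap K L ζ * a) (hζ : IsPrimitiveRoot ζ n) (hn : v (n : L) = 1)
    (ha : IntermediateField.adjoin K {a} = ⊤) (hdeg : Module.finrank K L = n) :
    GeneratesValueGroup K v a := by
  intro y hy
  obtain ⟨c, -, rfl⟩ := exists_eq_sum_range_pow_of_adjoin_eq_top ha y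
  rw [hdeg] at hy ⊢
  obtain ⟨i, -, hvi⟩ := huni.exists_valuation_sum_eq hσ hζ hn c
  refine ⟨c i, i, fun hci => hy ?_, by rw [hvi, map_mul, map_pow, zpow_natCast]⟩
  rw [← v.zero_iff, hvi, hci, map_zero, zero_mul, map_zero]

theorem IsUnibranched.adjoin_residue_eq_top [FiniteDimensional K L] (huni : IsUnibranched K v)
    (hσ : σ a = algebraMap K L ζ * a) (hζ : IsPrimitiveRoot ζ n) (hn : v (n : L) = 1)
    (ha : IntermediateField.adjoin K {a} = ⊤) (hdeg : Module.finrank K L = n) (hva : v a = 1) :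
    Algebra.adjoin (ResidueField (v.comap (algebraMap K L)).valuationSubring)
      {residue _ (⟨a, hva.le⟩ : v.valuationSubring)} = ⊤ := by
  refine eq_top_iff.2 fun z _ => ?_
  obtain ⟨x, rfl⟩ := residue_surjective z
  obtain ⟨c, hc0, hc⟩ := exists_eq_sum_range_pow_of_adjoin_eq_top ha x
  rw [hdeg] at hc0 hc
  have hcle (i : ℕ) : v (algebraMap K L (c i)) ≤ 1 := by
    obtain hi | hi := lt_or_ge i n
    · simpa [hva] using (huni.valuation_le_valuation_sum hσ hζ hn c hi).trans (hc ▸ x.2)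
    · simp [hc0 i hi]
  have hx : x = ∑ i ∈ range n, ⟨algebraMap K L (c i), hcle i⟩ * ⟨a, hva.le⟩ ^ i :=
    Subtype.ext (by rw [hc]; push_cast; rfl)
  rw [hx, map_sum]
  refine Subalgebra.sum_mem _ fun i _ => ?_
  obtain ⟨r, hr⟩ := residue_mem_range_algebraMap (K := K) ⟨algebraMap K L (c i), hcle i⟩ ⟨c i, rfl⟩
  rw [map_mul, map_pow, ← hr]
  exact Subalgebra.mul_mem _ (Subalgebra.algebraMap_mem _ r)
    (Subalgebra.pow_mem _ (Algebra.subset_adjoin (Set.mem_singleton _)) i)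

theorem IsUnibranched.algebraMap_residue_surjective [FiniteDimensional K L]
    (huni : IsUnibranched K v) (hσ : σ a = algebraMap K L ζ * a) (hζ : IsPrimitiveRoot ζ n)
    (hn : v (n : L) = 1) (ha : IntermediateField.adjoin K {a} = ⊤)
    (hdeg : Module.finrank K L = n)
    (hna : ∀ i, 0 < i → i < n → ∀ c : K, v (algebraMap K L c * a ^ i) ≠ 1) :
    Function.Surjective (algebraMap (ResidueField (v.comap (algebraMap K L)).valuationSubring)
      (ResidueField v.valuationSubring)) := by
  have hn0 : 0 < n := Nat.pos_of_ne_zero (by rintro rfl; simp at hn)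
  intro z
  obtain ⟨x, rfl⟩ := residue_surjective z
  obtain ⟨c, -, hc⟩ := exists_eq_sum_range_pow_of_adjoin_eq_top ha x
  rw [hdeg] at hc
  have hterm (i : ℕ) (hi : i < n) : v (algebraMap K L (c i) * a ^ i) ≤ 1 :=
    (huni.valuation_le_valuation_sum hσ hζ hn c hi).trans (hc ▸ x.2)
  have hc0 : v (algebraMap K L (c 0)) ≤ 1 := by simpa using hterm 0 hn0
  have hsub : v ((x : L) - algebraMap K L (c 0)) < 1 := by
    rw [hc, ← Finset.add_sum_erase _ _ (mem_range.2 hn0), pow_zero, mul_one, add_sub_cancel_left]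
    refine v.map_sum_lt one_ne_zero fun i hi => ?_
    obtain ⟨hi0, hin⟩ := Finset.mem_erase.1 hi
    exact (hterm i (mem_range.1 hin)).lt_of_ne
      (hna i (Nat.pos_of_ne_zero hi0) (mem_range.1 hin) (c i))
  obtain ⟨r, hr⟩ := residue_mem_range_algebraMap (K := K) ⟨algebraMap K L (c 0), hc0⟩ ⟨c 0, rfl⟩
  refine ⟨r, hr.trans ?_⟩
  rw [eq_comm, ← sub_eq_zero, ← map_sub, residue_eq_zero_iff, Valuation.mem_maximalIdeal_iff]
  exact hsub

theorem IsKummerGenerator.exists_valuation_eq_one (ha : IsKummerGenerator K n a)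
    (hσ : σ a = algebraMap K L ζ * a) (hL : Module.finrank K L ≠ 1)
    (hva : v a ∈ Set.range (v.comap (algebraMap K L))) :
    ∃ η : L, IsKummerGenerator K n η ∧ σ η = algebraMap K L ζ * η ∧ v η = 1 := by
  obtain ⟨c, hc⟩ := hva
  have ha0 : a ≠ 0 := ha.ne_zero hL
  have hc0 : c ≠ 0 := by
    rintro rfl
    exact ha0 (v.zero_iff.1 (by simpa using hc.symm))
  refine ⟨algebraMap K L c⁻¹ * a, ha.algebraMap_mul (inv_ne_zero hc0), ?_, ?_⟩
  · rw [map_mul, AlgEquiv.commutes, hσ, mul_left_comm]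
  · rw [map_mul, map_inv₀, map_inv₀, ← Valuation.comap_apply, hc,
      inv_mul_cancel₀ ((v.ne_zero_iff).2 ha0)]

theorem valuation_algebraMap_mul_pow_ne_one {q : ℕ} (hq : q.Prime)
    (hk : a ^ q ∈ (algebraMap K L).range) (hva : v a ∉ Set.range (v.comap (algebraMap K L)))
    {i : ℕ} (hi0 : 0 < i) (hiq : i < q) (c : K) : v (algebraMap K L c * a ^ i) ≠ 1 := by
  intro h
  obtain ⟨k, hk⟩ := hk
  refine hva ((v.comap (algebraMap K L)).mem_range_of_pow_mem_range_of_coprime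
    ((Nat.Prime.coprime_iff_not_dvd hq).2 (Nat.not_dvd_of_pos_of_lt hi0 hiq))
    ⟨k, by simp [hk]⟩ ⟨c⁻¹, ?_⟩)
  rw [map_mul, map_pow] at h
  simp [eq_inv_of_mul_eq_one_right h]

end Kummer

end VP

theorem statement_18_general {K L : Type u} [Field K] [Field L] [Algebra K L]
    {Γ : Type v} [LinearOrderedCommGroupWithZero Γ] (v : Valuation L Γ)
    (q : ℕ) (hq : q.Prime) [IsGalois K L] (hdeg : Module.finrank K L = q)
    (ζ : K) (hζ : IsPrimitiveRoot ζ q)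
    (hcharKv : ringChar (ResidueField (v.comap (algebraMap K L)).valuationSubring) ≠ q)
    (huni : IsUnibranched K v) :
    (residueDegree K v = q →
      ∃ η : L, IsKummerGenerator K q η ∧ ∃ hη : v η = 1,
        IsUnit (⟨η, hη.le⟩ : v.valuationSubring) ∧
        Algebra.adjoin (ResidueField (v.comap (algebraMap K L)).valuationSubring)
          {IsLocalRing.residue _ (⟨η, hη.le⟩ : v.valuationSubring)} = ⊤ ∧
        (IsLocalRing.residue _ (⟨η, hη.le⟩ : v.valuationSubring)) ^ q ∈
          (algebraMap (ResidueField (v.comap (algebraMap K L)).valuationSubring)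
            (ResidueField v.valuationSubring)).range) ∧
    (ramificationIndex K v = q →
      ∃ η : L, IsKummerGenerator K q η ∧ GeneratesValueGroup K v η) := by
  have : Fact q.Prime := ⟨hq⟩
  have : FiniteDimensional K L := Module.finite_of_finrank_pos (hdeg ▸ hq.pos)
  have : IsCyclic (L ≃ₐ[K] L) :=
    isCyclic_of_prime_card (by rw [IsGalois.card_aut_eq_finrank, hdeg])
  obtain ⟨a, ha, σ, hσ⟩ := exists_isKummerGenerator_algEquiv_apply_eq_mul (hdeg ▸ hζ)
  rw [hdeg] at ha
  have hvq : v (q : L) = 1 := by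
    simpa using (v.comap (algebraMap K L)).map_natCast_eq_one_of_ringChar_ne hq hcharKv
  by_cases hva : v a ∈ Set.range (v.comap (algebraMap K L))
  · obtain ⟨η, hηgen, hση, hvη⟩ := ha.exists_valuation_eq_one hσ (hdeg ▸ hq.ne_one) hva
    have hram : ramificationIndex K v = 1 := ramificationIndex_eq_one_of_generatesValueGroup
      (huni.generatesValueGroup hση hζ hvq hηgen.1 hdeg) hvη
    refine ⟨fun _ => ⟨η, hηgen, hvη, ?_, huni.adjoin_residue_eq_top hση hζ hvq hηgen.1 hdeg hvη,
      ?_⟩, fun h => absurd (h.symm.trans hram) hq.ne_one⟩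
    · exact (Valuation.valuationSubring.integers v).isUnit_iff_valuation_eq_one.2 hvη
    · rw [← map_pow]
      exact residue_mem_range_algebraMap _ (by simpa using hηgen.2)
  · have hres : residueDegree K v = 1 := residueDegree_eq_one_of_surjective
      (huni.algebraMap_residue_surjective hσ hζ hvq ha.1 hdeg
        fun i hi0 hiq => valuation_algebraMap_mul_pow_ne_one hq ha.2 hva hi0 hiq)
    exact ⟨fun h => absurd (h.symm.trans hres) hq.ne_one,
      fun _ => ⟨a, ha, huni.generatesValueGroup hσ hζ hvq ha.1 hdeg⟩⟩

/-- in a unibranched Kummer extension of prime degree `q ≠ char Kv`: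
(1) if `[Lv : Kv] = q` there is a Kummer generator `η ∈ 𝒪_L^×` with `vη = 0` whose
residue is a Kummer generator of `Lv|Kv`; (2) if `(vL : vK) = q` there is a Kummer
generator whose value generates the value group extension. -/
theorem statement_18 {K L : Type u} [Field K] [Field L] [Algebra K L]
    {Γ : Type v} [LinearOrderedCommGroupWithZero Γ] (v : Valuation L Γ)
    (q : ℕ) (hq : q.Prime) [IsGalois K L] (hdeg : Module.finrank K L = q)
    (hcharK : ringChar K ≠ q) (ζ : K) (hζ : IsPrimitiveRoot ζ q)
    (hcharKv : ringChar (ResidueField (v.comap (algebraMap K L)).valuationSubring) ≠ q)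
    (huni : IsUnibranched K v) :
    (residueDegree K v = q →
      ∃ η : L, IsKummerGenerator K q η ∧ ∃ hη : v η = 1,
        IsUnit (⟨η, hη.le⟩ : v.valuationSubring) ∧
        Algebra.adjoin (ResidueField (v.comap (algebraMap K L)).valuationSubring)
          {IsLocalRing.residue _ (⟨η, hη.le⟩ : v.valuationSubring)} = ⊤ ∧
        (IsLocalRing.residue _ (⟨η, hη.le⟩ : v.valuationSubring)) ^ q ∈
          (algebraMap (ResidueField (v.comap (algebraMap K L)).valuationSubring)
            (ResidueField v.valuationSubring)).range) ∧
    (ramificationIndex K v = q →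
      ∃ η : L, IsKummerGenerator K q η ∧ GeneratesValueGroup K v η) :=
  statement_18_general v q hq hdeg ζ hζ hcharKv huni
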